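/- Given a ranked tree shape with n leaves and k cherries, there are exactly n!/2^k ranked phylogenetic trees (leaf-labeled ranked trees) mapped to it by the map that forgets leaf labels. -/

import Mathlib

/-- A rooted binary tree with ordered (left/right) children. -/
inductive OTree : Type
  | leaf : OTree
  | node : OTree → OTree → OTree
deriving DecidableEq

/-- Number of leaves. -/
def OTree.nLeaves : OTree → ℕ
  | .leaf => 1
  | .node l r => l.nLeaves + r.nLeaves

/-- Number of internal nodes. -/
def OTree.nInt : OTree → ℕ
  | .leaf => 0
  | .node l r => l.nInt + r.nInt + 1

/-- `t.isInt p` : the path `p` (`true` = left) leads to an internal node of `t`. -/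
def OTree.isInt : OTree → List Bool → Prop
  | .leaf, _ => False
  | .node _ _, [] => True
  | .node l _, true :: p => l.isInt p
  | .node _ r, false :: p => r.isInt p

/-- `t.isLf p` : the path `p` leads to a leaf of `t`. -/
def OTree.isLf : OTree → List Bool → Prop
  | .leaf, [] => True
  | .leaf, _ :: _ => False
  | .node _ _, [] => False
  | .node l _, true :: p => l.isLf p
  | .node _ r, false :: p => r.isLf p

/-- A ranking of the internal nodes of `t`: a bijection to `{1,…,n-1}` (here `Fin t.nInt`)
which strictly increases along every root-to-leaf path. -/
structure Ranking (t : OTree) where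
  rk : {p : List Bool // t.isInt p} → Fin t.nInt
  bij : Function.Bijective rk
  mono : ∀ p q : {p : List Bool // t.isInt p}, p.1 <+: q.1 → p.1 ≠ q.1 → rk p < rk q

/-- A ranked oriented tree. -/
def RankedOTree := Σ t : OTree, Ranking t

/-- Reorient a tree by swapping the two children at every position `p` with `σ p = true`. -/
def OTree.reorient (σ : List Bool → Bool) : OTree → OTree
  | .leaf => .leaf
  | .node l r =>
    let l' := l.reorient (fun p => σ (true :: p))
    let r' := r.reorient (fun p => σ (false :: p))
    if σ [] then .node r' l' else .node l' r'

/-- The induced map on paths: position `p` of `t` corresponds to `pmap σ p` of `t.reorient σ`. -/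
def pmap (σ : List Bool → Bool) : List Bool → List Bool
  | [] => []
  | b :: p => (xor b (σ [])) :: pmap (fun q => σ (b :: q)) p

/-- Two ranked oriented trees have the same ranked tree shape: some reorientation sends one to
the other, matching ranks. -/
def ShapeRel (x y : RankedOTree) : Prop :=
  ∃ σ : List Bool → Bool, y.1 = x.1.reorient σ ∧
    ∀ (p : {p : List Bool // x.1.isInt p}) (h : y.1.isInt (pmap σ p.1)),
      (y.2.rk ⟨pmap σ p.1, h⟩ : ℕ) = (x.2.rk p : ℕ)

/-- Number of cherries (internal nodes whose two children are both leaves). -/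
def OTree.nCherries : OTree → ℕ
  | .leaf => 0
  | .node .leaf .leaf => 1
  | .node l r => l.nCherries + r.nCherries

/-- A ranked phylogenetic tree, presented as an oriented representative: a ranked oriented tree
together with distinct leaf labels (a bijection from leaf positions to `Fin n`). -/
structure PhyloT where
  tree : OTree
  rank : Ranking tree
  lab : {p : List Bool // tree.isLf p} ≃ Fin tree.nLeaves

/-- Two labeled ranked oriented trees represent the same ranked phylogenetic tree:
some reorientation matches them, preserving ranks and leaf labels. -/
def PhyloRel (x y : PhyloT) : Prop :=
  ∃ σ : List Bool → Bool, y.tree = x.tree.reorient σ ∧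
    (∀ (p : {p : List Bool // x.tree.isInt p}) (h : y.tree.isInt (pmap σ p.1)),
      (y.rank.rk ⟨pmap σ p.1, h⟩ : ℕ) = (x.rank.rk p : ℕ)) ∧
    (∀ (p : {p : List Bool // x.tree.isLf p}) (h : y.tree.isLf (pmap σ p.1)),
      (y.lab ⟨pmap σ p.1, h⟩ : ℕ) = (x.lab p : ℕ))

/-- Ranked phylogenetic trees: labeled oriented representatives up to reorientation. -/
def PhyloTree := Quotient (Relation.EqvGen.setoid PhyloRel)


/-!
Represent the ranked tree shape by the ranked oriented tree `x`. Every ranked phylogenetic tree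
over this shape is represented by `x` itself with some leaf labelling, so the `n!` labellings of
`x` map onto the fibre. Two labellings give the same phylogenetic tree iff they differ by a
rank-preserving reorientation of `x`; since the ranks are distinct, such a reorientation fixes
every internal node and can therefore only flip cherries. The `2^k` cherry flips act freely on
labellings, so every point of the fibre has exactly `2^k` preimages.
-/

namespace OTree

def isCherry (t : OTree) (p : List Bool) : Prop :=
  t.isInt p ∧ t.isLf (p ++ [true]) ∧ t.isLf (p ++ [false])

theorem isInt_of_prefix : ∀ {t : OTree} {p : List Bool} (q : List Bool),
    t.isInt p → q <+: p → t.isInt q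
  | .leaf, _, _, h, _ => h.elim
  | .node _ _, _, [], _, _ => trivial
  | .node l r, _, b :: q, h, ⟨s, hs⟩ => by
    subst hs
    cases b
    · exact isInt_of_prefix (t := r) q h ⟨s, rfl⟩
    · exact isInt_of_prefix (t := l) q h ⟨s, rfl⟩

theorem isInt_of_prefix_of_isLf : ∀ {t : OTree} {p : List Bool} (q : List Bool),
    t.isLf p → q <+: p → q ≠ p → t.isInt q
  | .leaf, [], _, _, hq, hne => hne (List.prefix_nil.mp hq)
  | .leaf, _ :: _, _, h, _, _ => h.elim
  | .node _ _, _, [], _, _, _ => trivial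
  | .node l r, _, b :: q, h, ⟨s, hs⟩, hne => by
    subst hs
    have hne' : q ≠ q ++ s := fun he => hne (congrArg (b :: ·) he)
    cases b
    · exact isInt_of_prefix_of_isLf (t := r) q h ⟨s, rfl⟩ hne'
    · exact isInt_of_prefix_of_isLf (t := l) q h ⟨s, rfl⟩ hne'

theorem not_isLf_of_isInt : ∀ {t : OTree} {p : List Bool}, t.isInt p → ¬ t.isLf p
  | .leaf, _, h, _ => h
  | .node _ _, [], _, h => h
  | .node l _, true :: _, h, h' => not_isLf_of_isInt (t := l) h h'
  | .node _ r, false :: _, h, h' => not_isLf_of_isInt (t := r) h h'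

theorem isCherry.isLf_child {t : OTree} {q : List Bool} (h : t.isCherry q) :
    ∀ b, t.isLf (q ++ [b])
  | true => h.2.1
  | false => h.2.2

theorem not_isCherry_of_prefix {t : OTree} {p q : List Bool}
    (hp : t.isInt p) (hq : q <+: p) (hne : q ≠ p) : ¬ t.isCherry q := by
  intro hc
  obtain ⟨_ | ⟨b, s⟩, rfl⟩ := hq
  · exact hne (List.append_nil q).symm
  · exact not_isLf_of_isInt (isInt_of_prefix _ hp ⟨s, by simp⟩) (hc.isLf_child b)

theorem exists_isInt_child_of_not_isCherry : ∀ {t : OTree} {q : List Bool},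
    t.isInt q → ¬ t.isCherry q → ∃ b, t.isInt (q ++ [b])
  | .leaf, _, h, _ => h.elim
  | .node .leaf .leaf, [], _, hnc => (hnc ⟨trivial, trivial, trivial⟩).elim
  | .node .leaf (.node _ _), [], _, _ => ⟨false, trivial⟩
  | .node (.node _ _) _, [], _, _ => ⟨true, trivial⟩
  | .node l _, true :: _, h, hnc => exists_isInt_child_of_not_isCherry (t := l) h hnc
  | .node _ r, false :: _, h, hnc => exists_isInt_child_of_not_isCherry (t := r) h hnc

end OTree

def orientComp (σ τ : List Bool → Bool) : List Bool → Bool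
  | [] => xor (σ []) (τ [])
  | b :: p => orientComp (fun q => σ (b :: q)) (fun q => τ (xor b (σ []) :: q)) p

def orientInv (σ : List Bool → Bool) : List Bool → Bool
  | [] => σ []
  | b :: p => orientInv (fun q => σ (xor b (σ []) :: q)) p

theorem pmap_orientComp (σ τ : List Bool → Bool) : ∀ p : List Bool,
    pmap (orientComp σ τ) p = pmap τ (pmap σ p)
  | [] => rfl
  | _ :: _ => by simp [pmap, orientComp, pmap_orientComp]

theorem orientInv_cons (σ : List Bool → Bool) (b : Bool) :
    (fun q => orientInv σ (xor b (σ []) :: q)) = orientInv (fun q => σ (b :: q)) := by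
  funext q
  simp [orientInv]

theorem orientInv_orientInv (σ : List Bool → Bool) : orientInv (orientInv σ) = σ := by
  funext p
  induction p generalizing σ with
  | nil => rfl
  | cons c p ih =>
    show orientInv (fun q => orientInv σ (xor c (σ []) :: q)) p = σ (c :: p)
    rw [orientInv_cons σ c, ih]

theorem pmap_orientInv_pmap (σ : List Bool → Bool) : ∀ p : List Bool,
    pmap (orientInv σ) (pmap σ p) = p
  | [] => rfl
  | b :: p => by
    simp only [pmap]
    congr 1
    · simp [orientInv]
    · show pmap (fun q => orientInv σ (xor b (σ []) :: q)) _ = p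
      rw [orientInv_cons, pmap_orientInv_pmap]

theorem pmap_pmap_orientInv (σ : List Bool → Bool) (p : List Bool) :
    pmap σ (pmap (orientInv σ) p) = p := by
  simpa only [orientInv_orientInv] using pmap_orientInv_pmap (orientInv σ) p

theorem pmap_const_false : ∀ p : List Bool, pmap (fun _ => false) p = p
  | [] => rfl
  | b :: p => by simp only [pmap, Bool.xor_false, pmap_const_false p]

theorem pmap_congr : ∀ (p : List Bool) {σ τ : List Bool → Bool},
    (∀ q, q <+: p → q ≠ p → σ q = τ q) → pmap σ p = pmap τ p
  | [], _, _, _ => rfl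
  | b :: p, σ, τ, h => by
    have h0 : σ [] = τ [] := h [] List.nil_prefix (by simp)
    simp only [pmap, h0, List.cons.injEq, true_and]
    exact pmap_congr p fun q hq hne =>
      h (b :: q) (by simpa using hq) (by simpa using hne)

theorem pmap_append_singleton : ∀ {p : List Bool} {σ : List Bool → Bool} (b : Bool),
    pmap σ p = p → pmap σ (p ++ [b]) = p ++ [xor b (σ p)]
  | [], _, _, _ => rfl
  | a :: p, σ, b, h => by
    simp only [pmap, List.cons_append, List.cons.injEq] at h ⊢
    exact ⟨h.1, pmap_append_singleton b h.2⟩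

namespace OTree

theorem reorient_orientComp (σ τ : List Bool → Bool) : ∀ t : OTree,
    (t.reorient σ).reorient τ = t.reorient (orientComp σ τ)
  | .leaf => rfl
  | .node l r => by
    have ihl := fun σ' τ' => reorient_orientComp σ' τ' l
    have ihr := fun σ' τ' => reorient_orientComp σ' τ' r
    simp only [reorient]
    cases hσ : σ [] <;> cases hτ : τ [] <;> simp_all [reorient, orientComp]

theorem reorient_orientInv (σ : List Bool → Bool) : ∀ t : OTree,
    (t.reorient σ).reorient (orientInv σ) = t
  | .leaf => rfl
  | .node l r => by
    have ihl := fun σ' => reorient_orientInv σ' l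
    have ihr := fun σ' => reorient_orientInv σ' r
    simp only [reorient]
    cases hσ : σ [] <;> simp_all [reorient, orientInv]

theorem isInt.reorient (σ : List Bool → Bool) : ∀ {t : OTree} {p : List Bool},
    t.isInt p → (t.reorient σ).isInt (pmap σ p)
  | .leaf, _, h => h.elim
  | .node l r, [], _ => by
    simp only [OTree.reorient]
    cases σ [] <;> trivial
  | .node l _, true :: _, h => by
    simp only [OTree.reorient, pmap]
    cases σ [] <;> simpa [isInt] using isInt.reorient _ (t := l) h
  | .node _ r, false :: _, h => by
    simp only [OTree.reorient, pmap]
    cases σ [] <;> simpa [isInt] using isInt.reorient _ (t := r) h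

theorem isLf.reorient (σ : List Bool → Bool) : ∀ {t : OTree} {p : List Bool},
    t.isLf p → (t.reorient σ).isLf (pmap σ p)
  | .leaf, [], _ => trivial
  | .leaf, _ :: _, h => h.elim
  | .node _ _, [], h => h.elim
  | .node l _, true :: _, h => by
    simp only [OTree.reorient, pmap]
    cases σ [] <;> simpa [isLf] using isLf.reorient _ (t := l) h
  | .node _ r, false :: _, h => by
    simp only [OTree.reorient, pmap]
    cases σ [] <;> simpa [isLf] using isLf.reorient _ (t := r) h

theorem nLeaves_reorient (σ : List Bool → Bool) : ∀ t : OTree,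
    (t.reorient σ).nLeaves = t.nLeaves
  | .leaf => rfl
  | .node l r => by
    simp only [reorient]
    cases σ [] <;> simp [nLeaves, nLeaves_reorient _ l, nLeaves_reorient _ r, Nat.add_comm]

theorem reorient_eq_self : ∀ {t : OTree} {σ : List Bool → Bool},
    (∀ q, t.isInt q → ¬ t.isCherry q → σ q = false) → t.reorient σ = t
  | .leaf, _, _ => rfl
  | .node l r, σ, h => by
    have hl : l.reorient (fun p => σ (true :: p)) = l :=
      reorient_eq_self fun q hq hnc => h (true :: q) hq hnc
    have hr : r.reorient (fun p => σ (false :: p)) = r :=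
      reorient_eq_self fun q hq hnc => h (false :: q) hq hnc
    simp only [reorient, hl, hr]
    split_ifs with hσ
    · -- only a cherry may be flipped at the root, and flipping a cherry changes nothing
      obtain ⟨-, hl', hr'⟩ : (node l r).isCherry [] := by
        by_contra hnc
        simp [h [] trivial hnc] at hσ
      cases l <;> cases r <;> first | rfl | exact hl'.elim | exact hr'.elim
    · rfl

theorem reorient_const_false (t : OTree) : t.reorient (fun _ => false) = t :=
  reorient_eq_self fun _ _ _ => rfl

end OTree

def Matches (P : OTree → List Bool → Prop) (σ : List Bool → Bool) {t t' : OTree}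
    (f : {p // P t p} → ℕ) (g : {p // P t' p} → ℕ) : Prop :=
  ∀ (p : {p // P t p}) (h : P t' (pmap σ p.1)), g ⟨pmap σ p.1, h⟩ = f p

namespace Matches

variable {P : OTree → List Bool → Prop} {σ τ : List Bool → Bool} {t t' t'' : OTree}
  {f : {p // P t p} → ℕ} {g : {p // P t' p} → ℕ} {k : {p // P t'' p} → ℕ}

theorem refl (f : {p // P t p} → ℕ) : Matches P (fun _ => false) f f := by
  intro p h
  congr 1
  exact Subtype.ext (pmap_const_false p.1)

theorem symm (h : Matches P σ f g) : Matches P (orientInv σ) g f := by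
  intro p hp
  have hσ := pmap_pmap_orientInv σ p.1
  have := h ⟨pmap (orientInv σ) p.1, hp⟩ (by rw [hσ]; exact p.2)
  simp only [hσ] at this
  exact this.symm

theorem trans (hP : ∀ σ {t p}, P t p → P (t.reorient σ) (pmap σ p))
    (ht : t' = t.reorient σ) (h₁ : Matches P σ f g) (h₂ : Matches P τ g k) :
    Matches P (orientComp σ τ) f k := by
  intro p hp
  have hp' : P t' (pmap σ p.1) := ht ▸ hP σ p.2
  rw [← h₁ p hp', ← h₂ ⟨_, hp'⟩ (pmap_orientComp σ τ p.1 ▸ hp)]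
  simp only [pmap_orientComp]

end Matches

theorem phyloRel_iff {x y : PhyloT} : PhyloRel x y ↔ ∃ σ, y.tree = x.tree.reorient σ ∧
    Matches OTree.isInt σ (fun p => (x.rank.rk p : ℕ)) (fun p => (y.rank.rk p : ℕ)) ∧
    Matches OTree.isLf σ (fun p => (x.lab p : ℕ)) (fun p => (y.lab p : ℕ)) :=
  Iff.rfl

theorem shapeRel_iff {x y : RankedOTree} : ShapeRel x y ↔ ∃ σ, y.1 = x.1.reorient σ ∧
    Matches OTree.isInt σ (fun p => (x.2.rk p : ℕ)) (fun p => (y.2.rk p : ℕ)) :=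
  Iff.rfl

theorem phyloRel_equivalence : Equivalence PhyloRel where
  refl a := phyloRel_iff.2 ⟨_, a.tree.reorient_const_false.symm, .refl _, .refl _⟩
  symm h := by
    obtain ⟨σ, ht, hr, hl⟩ := phyloRel_iff.1 h
    exact phyloRel_iff.2 ⟨orientInv σ, by rw [ht, OTree.reorient_orientInv], hr.symm, hl.symm⟩
  trans h₁ h₂ := by
    obtain ⟨σ, ht, hr, hl⟩ := phyloRel_iff.1 h₁
    obtain ⟨τ, ht', hr', hl'⟩ := phyloRel_iff.1 h₂
    exact phyloRel_iff.2 ⟨orientComp σ τ, by rw [ht', ht, OTree.reorient_orientComp],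
      hr.trans OTree.isInt.reorient ht hr',
      hl.trans OTree.isLf.reorient ht hl'⟩

theorem shapeRel_equivalence : Equivalence ShapeRel where
  refl a := shapeRel_iff.2 ⟨_, a.1.reorient_const_false.symm, .refl _⟩
  symm h := by
    obtain ⟨σ, ht, hr⟩ := shapeRel_iff.1 h
    exact shapeRel_iff.2 ⟨orientInv σ, by rw [ht, OTree.reorient_orientInv], hr.symm⟩
  trans h₁ h₂ := by
    obtain ⟨σ, ht, hr⟩ := shapeRel_iff.1 h₁
    obtain ⟨τ, ht', hr'⟩ := shapeRel_iff.1 h₂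
    exact shapeRel_iff.2 ⟨orientComp σ τ, by rw [ht', ht, OTree.reorient_orientComp],
      hr.trans OTree.isInt.reorient ht hr'⟩

namespace OTree

def leafEquivOfReorient {t t' : OTree} (σ : List Bool → Bool) (h : t' = t.reorient σ) :
    {p // t.isLf p} ≃ {p // t'.isLf p} where
  toFun p := ⟨pmap σ p.1, h ▸ p.2.reorient σ⟩
  invFun p := ⟨pmap (orientInv σ) p.1, by
    simpa only [h, reorient_orientInv] using (p.2.reorient (orientInv σ))⟩
  left_inv p := Subtype.ext (pmap_orientInv_pmap σ p.1)
  right_inv p := Subtype.ext (pmap_pmap_orientInv σ p.1)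

@[simp]
theorem leafEquivOfReorient_apply_coe {t t' : OTree} (σ : List Bool → Bool)
    (h : t' = t.reorient σ) (p : {p // t.isLf p}) :
    (leafEquivOfReorient σ h p : List Bool) = pmap σ p :=
  rfl

def leafEquivSum (l r : OTree) :
    {p // (node l r).isLf p} ≃ {p // l.isLf p} ⊕ {p // r.isLf p} where
  toFun
    | ⟨[], h⟩ => h.elim
    | ⟨true :: q, h⟩ => .inl ⟨q, h⟩
    | ⟨false :: q, h⟩ => .inr ⟨q, h⟩
  invFun
    | .inl ⟨q, h⟩ => ⟨true :: q, h⟩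
    | .inr ⟨q, h⟩ => ⟨false :: q, h⟩
  left_inv
    | ⟨[], h⟩ => h.elim
    | ⟨true :: _, _⟩ | ⟨false :: _, _⟩ => rfl
  right_inv
    | .inl _ | .inr _ => rfl

def leafEquivFin : (t : OTree) → {p // t.isLf p} ≃ Fin t.nLeaves
  | .leaf =>
    { toFun _ := ⟨0, Nat.one_pos⟩
      invFun _ := ⟨[], trivial⟩
      left_inv
        | ⟨[], _⟩ => rfl
        | ⟨_ :: _, h⟩ => h.elim
      right_inv i := Fin.ext (Nat.lt_one_iff.mp i.2).symm }
  | .node l r =>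
    (leafEquivSum l r).trans (((leafEquivFin l).sumCongr (leafEquivFin r)).trans finSumFinEquiv)

def cherryEquivSum (l r : OTree) (hnc : ¬ (node l r).isCherry []) :
    {p // (node l r).isCherry p} ≃ {p // l.isCherry p} ⊕ {p // r.isCherry p} where
  toFun
    | ⟨[], h⟩ => absurd h hnc
    | ⟨true :: q, h⟩ => .inl ⟨q, h⟩
    | ⟨false :: q, h⟩ => .inr ⟨q, h⟩
  invFun
    | .inl ⟨q, h⟩ => ⟨true :: q, h⟩
    | .inr ⟨q, h⟩ => ⟨false :: q, h⟩
  left_inv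
    | ⟨[], h⟩ => absurd h hnc
    | ⟨true :: _, _⟩ | ⟨false :: _, _⟩ => rfl
  right_inv
    | .inl _ | .inr _ => rfl

def cherryEquivFin : (t : OTree) → {p // t.isCherry p} ≃ Fin t.nCherries
  | .leaf =>
    { toFun p := False.elim p.2.1
      invFun i := i.elim0
      left_inv p := False.elim p.2.1
      right_inv i := i.elim0 }
  | .node .leaf .leaf =>
    { toFun _ := ⟨0, Nat.one_pos⟩
      invFun _ := ⟨[], trivial, trivial, trivial⟩
      left_inv
        | ⟨[], _⟩ => rfl
        | ⟨true :: _, h⟩ | ⟨false :: _, h⟩ => False.elim h.1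
      right_inv i := Fin.ext (Nat.lt_one_iff.mp i.2).symm }
  | .node .leaf (.node a b) =>
    (cherryEquivSum .leaf (.node a b) fun h => h.2.2).trans
      (((cherryEquivFin .leaf).sumCongr (cherryEquivFin (.node a b))).trans finSumFinEquiv)
  | .node (.node a b) r =>
    (cherryEquivSum (.node a b) r fun h => h.2.1).trans
      (((cherryEquivFin (.node a b)).sumCongr (cherryEquivFin r)).trans finSumFinEquiv)

theorem card_leafLabelings (t : OTree) :
    Nat.card ({p // t.isLf p} ≃ Fin t.nLeaves) = t.nLeaves.factorial := by
  rw [Nat.card_congr ((leafEquivFin t).equivCongr (Equiv.refl _)), Nat.card_perm, Nat.card_fin]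

theorem card_cherryFlags (t : OTree) :
    Nat.card ({p // t.isCherry p} → Bool) = 2 ^ t.nCherries := by
  rw [Nat.card_congr ((cherryEquivFin t).arrowCongr (Equiv.refl Bool))]
  simp

end OTree

namespace OTree

variable (t : OTree)

open Classical in
noncomputable def cherrySwap (d : {q // t.isCherry q} → Bool) : List Bool → Bool :=
  fun q => if h : t.isCherry q then d ⟨q, h⟩ else false

variable {t}

theorem reorient_cherrySwap (d : {q // t.isCherry q} → Bool) :
    t.reorient (t.cherrySwap d) = t :=
  reorient_eq_self fun _ _ hnc => dif_neg hnc

theorem pmap_cherrySwap_of_isInt (d : {q // t.isCherry q} → Bool) {p : List Bool}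
    (hp : t.isInt p) : pmap (t.cherrySwap d) p = p :=
  (pmap_congr p fun _ hq hne => dif_neg (not_isCherry_of_prefix hp hq hne)).trans
    (pmap_const_false p)

theorem pmap_cherrySwap_child (d : {q // t.isCherry q} → Bool) {q : List Bool}
    (hq : t.isCherry q) (b : Bool) :
    pmap (t.cherrySwap d) (q ++ [b]) = q ++ [xor b (d ⟨q, hq⟩)] := by
  rw [pmap_append_singleton b (pmap_cherrySwap_of_isInt d hq.1), cherrySwap, dif_pos hq]

variable (t) in
noncomputable def cherrySwapPerm (d : {q // t.isCherry q} → Bool) :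
    Equiv.Perm {p // t.isLf p} :=
  leafEquivOfReorient (t.cherrySwap d) (reorient_cherrySwap d).symm

theorem cherrySwapPerm_injective : Function.Injective t.cherrySwapPerm := by
  intro d d' h
  funext ⟨q, hq⟩
  have h' := congrArg Subtype.val (Equiv.ext_iff.mp h ⟨q ++ [true], hq.isLf_child true⟩)
  simp only [cherrySwapPerm, leafEquivOfReorient_apply_coe, pmap_cherrySwap_child _ hq] at h'
  simpa using h'

theorem eq_false_of_pmap_eq_self {σ : List Bool → Bool}
    (hfix : ∀ p, t.isInt p → pmap σ p = p) {q : List Bool} (hq : t.isInt q)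
    (hnc : ¬ t.isCherry q) : σ q = false := by
  -- flipping a non-cherry would move one of its internal children
  obtain ⟨b, hb⟩ := exists_isInt_child_of_not_isCherry hq hnc
  have h := hfix _ hb
  rw [pmap_append_singleton b (hfix q hq)] at h
  cases b <;> simpa using h

theorem pmap_eq_pmap_cherrySwap {σ : List Bool → Bool}
    (hfix : ∀ p, t.isInt p → pmap σ p = p) {p : List Bool} (hp : t.isLf p) :
    pmap σ p = pmap (t.cherrySwap fun q => σ q.1) p :=
  pmap_congr p fun q hq hne => by
    by_cases hc : t.isCherry q
    · rw [cherrySwap, dif_pos hc]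
    · rw [cherrySwap, dif_neg hc,
        eq_false_of_pmap_eq_self hfix (isInt_of_prefix_of_isLf q hp hq hne) hc]

end OTree

theorem Nat.card_eq_card_mul_card_of_orbits {α β γ : Type*} {f : α → β} (act : γ → α → α)
    (hf : Function.Surjective f) (hact : ∀ a a', f a = f a' ↔ ∃ g, a = act g a')
    (hfree : ∀ a, Function.Injective (act · a)) :
    Nat.card α = Nat.card β * Nat.card γ := by
  choose s hs using hf
  have orbitEquiv (b : β) : γ ≃ {a // f a = b} :=
    Equiv.ofBijective (fun g => ⟨act g (s b), ((hact _ _).2 ⟨g, rfl⟩).trans (hs b)⟩)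
      ⟨fun g g' h => hfree _ (congrArg Subtype.val h), fun ⟨a, ha⟩ => by
        obtain ⟨g, hg⟩ := (hact a (s b)).1 (ha.trans (hs b).symm)
        exact ⟨g, Subtype.ext hg.symm⟩⟩
  rw [← Nat.card_prod, Nat.card_congr ((Equiv.sigmaFiberEquiv f).symm.trans
    ((Equiv.sigmaCongrRight fun b => (orbitEquiv b).symm).trans (Equiv.sigmaEquivProd β γ)))]

section LabeledRepresentatives

variable (x : RankedOTree)

def withLabels (lab : {p // x.1.isLf p} ≃ Fin x.1.nLeaves) : PhyloT := ⟨x.1, x.2, lab⟩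

variable {x}

theorem phyloRel_withLabels_iff {lab₁ lab₂ : {p // x.1.isLf p} ≃ Fin x.1.nLeaves} :
    PhyloRel (withLabels x lab₁) (withLabels x lab₂) ↔
      ∃ d, lab₁ = (x.1.cherrySwapPerm d).trans lab₂ := by
  constructor
  · rintro ⟨σ, hσ, hrank, hlab⟩
    replace hσ : x.1 = x.1.reorient σ := hσ
    have hint {p : List Bool} (hp : x.1.isInt p) : x.1.isInt (pmap σ p) := by
      rw [hσ]; exact hp.reorient σ
    have hlf {p : List Bool} (hp : x.1.isLf p) : x.1.isLf (pmap σ p) := by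
      rw [hσ]; exact hp.reorient σ
    -- the ranking is injective, so a rank-preserving self-reorientation fixes internal nodes
    have hfix (p : List Bool) (hp : x.1.isInt p) : pmap σ p = p :=
      congrArg Subtype.val (x.2.bij.injective (Fin.ext (hrank ⟨p, hp⟩ (hint hp))))
    refine ⟨fun q => σ q.1, Equiv.ext fun p => ?_⟩
    exact (Fin.ext (hlab p (hlf p.2))).symm.trans
      (congrArg lab₂ (Subtype.ext (OTree.pmap_eq_pmap_cherrySwap hfix p.2)))
  · rintro ⟨d, rfl⟩
    refine ⟨x.1.cherrySwap d, (OTree.reorient_cherrySwap d).symm, fun p _ => ?_, fun _ _ => rfl⟩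
    exact congrArg (fun p => (x.2.rk p : ℕ)) (Subtype.ext (OTree.pmap_cherrySwap_of_isInt d p.2))

theorem exists_phyloRel_withLabels (a : PhyloT) (h : ShapeRel ⟨a.tree, a.rank⟩ x) :
    ∃ lab, PhyloRel a (withLabels x lab) := by
  obtain ⟨σ, ht, hrk⟩ := h
  have hn : a.tree.nLeaves = x.1.nLeaves := by rw [ht, OTree.nLeaves_reorient]
  refine ⟨(OTree.leafEquivOfReorient σ ht).symm.trans (a.lab.trans (finCongr hn)),
    σ, ht, hrk, fun p h => ?_⟩
  have hp : (OTree.leafEquivOfReorient σ ht).symm ⟨pmap σ p.1, h⟩ = p :=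
    (Equiv.symm_apply_eq _).2 rfl
  change (finCongr hn (a.lab ((OTree.leafEquivOfReorient σ ht).symm ⟨pmap σ p.1, h⟩)) : ℕ) = _
  rw [hp, finCongr_apply, Fin.val_cast]

variable (x) in
def ShapeFiber : Type :=
  {c : PhyloTree // ∃ a : PhyloT, Quotient.mk (Relation.EqvGen.setoid PhyloRel) a = c ∧
    Relation.EqvGen ShapeRel ⟨a.tree, a.rank⟩ x}

variable (x) in
def ShapeFiber.ofLabels (lab : {p // x.1.isLf p} ≃ Fin x.1.nLeaves) : ShapeFiber x :=
  ⟨Quotient.mk _ (withLabels x lab), _, rfl, .refl x⟩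

theorem ShapeFiber.ofLabels_surjective : Function.Surjective (ShapeFiber.ofLabels x) := by
  rintro ⟨c, a, rfl, ha⟩
  obtain ⟨lab, hlab⟩ := exists_phyloRel_withLabels a (shapeRel_equivalence.eqvGen_iff.1 ha)
  exact ⟨lab, Subtype.ext (Quotient.sound (Relation.EqvGen.rel _ _ hlab)).symm⟩

theorem ShapeFiber.ofLabels_eq_iff (lab₁ lab₂ : {p // x.1.isLf p} ≃ Fin x.1.nLeaves) :
    ShapeFiber.ofLabels x lab₁ = ShapeFiber.ofLabels x lab₂ ↔
      ∃ d, lab₁ = (x.1.cherrySwapPerm d).trans lab₂ := by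
  rw [← phyloRel_withLabels_iff, ← phyloRel_equivalence.eqvGen_iff]
  exact Subtype.ext_iff.trans Quotient.eq

end LabeledRepresentatives

/-- a ranked tree shape with n leaves and k cherries (represented by a ranked
oriented tree `x`) has exactly n!/2^k ranked phylogenetic trees mapping to it under the map
forgetting leaf labels (stated multiplicatively: count · 2^k = n!). -/
theorem stmt2 (x : RankedOTree) (n k : ℕ)
    (hn : x.1.nLeaves = n) (hk : x.1.nCherries = k) :
    Nat.card {c : PhyloTree // ∃ a : PhyloT, Quotient.mk (Relation.EqvGen.setoid PhyloRel) a = c ∧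
        Relation.EqvGen ShapeRel ⟨a.tree, a.rank⟩ x} * 2 ^ k = n.factorial := by
  subst hn hk
  rw [← x.1.card_leafLabelings, ← x.1.card_cherryFlags]
  exact (Nat.card_eq_card_mul_card_of_orbits (fun d lab => (x.1.cherrySwapPerm d).trans lab)
    ShapeFiber.ofLabels_surjective ShapeFiber.ofLabels_eq_iff
    fun lab _ _ h =>
      OTree.cherrySwapPerm_injective (Equiv.ext fun p => lab.injective (Equiv.congr_fun h p))).symm
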